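/- The singular modulus for r = 1/5 is k_{1/5} = √((9 + 4√5 + 2√(38 + 17√5))/(18 + 8√5)); that is, this value of k ∈ (0,1) satisfies K(√(1−k²))/K(k) = 1/√5. -/

import Mathlib

open Real

/-- Complete elliptic integral of the first kind. -/
noncomputable def K (k : ℝ) : ℝ := ∫ t in (0:ℝ)..(π/2), 1 / Real.sqrt (1 - k^2 * Real.sin t ^ 2)

open Set Filter Topology

/-!
If y = P(x)/Q(x) with Q² - P² = (1 - x²) F², Q² - b² P² = (1 - a² x²) G² and P'Q - PQ' = M F G,
then dy / √((1 - y²)(1 - b² y²)) = M dx / √((1 - x²)(1 - a² x²)); if moreover y runs from 0 to 1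
as x does, then K(b) = M K(a). In trigonometric form this is the substitution
sin φ = P(sin t)/Q(sin t). Jacobi's transformation of order 5 provides such P (odd, of degree 5)
and Q, F, G (even, of degree 4) with M = √5, b = k and a = k', where k² = 1/2 + (9 - 4√5) √(38 + 17√5)
is the rationalised square of the modulus in the statement. The coefficients lie in
ℚ(√5, √(38 + 17√5)), and the three identities hold modulo the relations satisfied by the two
square roots.
-/

noncomputable def ellipticF (k φ : ℝ) : ℝ := ∫ t in (0 : ℝ)..φ, 1 / √(1 - k ^ 2 * sin t ^ 2)

lemma one_sub_sq_mul_sin_sq_pos {k : ℝ} (hk : k ^ 2 < 1) (t : ℝ) : 0 < 1 - k ^ 2 * sin t ^ 2 := by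
  nlinarith [mul_le_mul_of_nonneg_left (sin_sq_le_one t) (sq_nonneg k)]

lemma continuous_one_div_sqrt_one_sub_sq_mul_sin_sq {k : ℝ} (hk : k ^ 2 < 1) :
    Continuous fun t => 1 / √(1 - k ^ 2 * sin t ^ 2) :=
  continuous_const.div (by fun_prop) fun t => (sqrt_pos.2 (one_sub_sq_mul_sin_sq_pos hk t)).ne'

lemma continuous_ellipticF {k : ℝ} (hk : k ^ 2 < 1) : Continuous (ellipticF k) :=
  intervalIntegral.continuous_primitive
    (fun _ _ => (continuous_one_div_sqrt_one_sub_sq_mul_sin_sq hk).intervalIntegrable _ _) 0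

lemma K_pos {k : ℝ} (hk : k ^ 2 < 1) : 0 < K k :=
  intervalIntegral.intervalIntegral_pos_of_pos
    ((continuous_one_div_sqrt_one_sub_sq_mul_sin_sq hk).intervalIntegrable _ _)
    (fun t => one_div_pos.2 (sqrt_pos.2 (one_sub_sq_mul_sin_sq_pos hk t))) pi_div_two_pos

lemma sin_mem_Ico_of_mem_Ico {t : ℝ} (ht : t ∈ Ico 0 (π / 2)) : sin t ∈ Ico 0 1 := by
  refine ⟨sin_nonneg_of_nonneg_of_le_pi ht.1 (by linarith [ht.2, pi_pos]), ?_⟩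
  simpa using sin_lt_sin_of_lt_of_le_pi_div_two (by linarith [ht.1, pi_pos]) le_rfl ht.2

lemma cos_pos_of_mem_Ico {t : ℝ} (ht : t ∈ Ico 0 (π / 2)) : 0 < cos t :=
  cos_pos_of_mem_Ioo ⟨by linarith [ht.1, pi_pos], ht.2⟩

structure RationalTransformation (a b M : ℝ) where
  (P Q F G : ℝ → ℝ)
  differentiable_P : Differentiable ℝ P
  differentiable_Q : Differentiable ℝ Q
  continuous_G : Continuous G
  Q_pos : ∀ x ∈ Icc (0 : ℝ) 1, 0 < Q x
  F_pos : ∀ x ∈ Icc (0 : ℝ) 1, 0 < F x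
  G_pos : ∀ x ∈ Icc (0 : ℝ) 1, 0 < G x
  sq_sub_sq : ∀ x, Q x ^ 2 - P x ^ 2 = (1 - x ^ 2) * F x ^ 2
  sq_sub_sq_mul_sq : ∀ x, Q x ^ 2 - b ^ 2 * P x ^ 2 = (1 - a ^ 2 * x ^ 2) * G x ^ 2
  wronskian : ∀ x, deriv P x * Q x - P x * deriv Q x = M * (F x * G x)
  P_zero : P 0 = 0
  P_one : P 1 = Q 1

namespace RationalTransformation

variable {a b M : ℝ} (T : RationalTransformation a b M)

noncomputable def amplitude (t : ℝ) : ℝ := arcsin (T.P (sin t) / T.Q (sin t))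

lemma amplitude_zero : T.amplitude 0 = 0 := by simp [amplitude, T.P_zero]

lemma amplitude_pi_div_two : T.amplitude (π / 2) = π / 2 := by
  simp [amplitude, T.P_one, (T.Q_pos 1 (right_mem_Icc.2 zero_le_one)).ne']

lemma continuousAt_amplitude_pi_div_two : ContinuousAt T.amplitude (π / 2) := by
  have hQ : T.Q (sin (π / 2)) ≠ 0 := by
    simpa using (T.Q_pos 1 (right_mem_Icc.2 zero_le_one)).ne'
  exact continuous_arcsin.continuousAt.comp <|
    ((T.differentiable_P.continuous.comp continuous_sin).continuousAt).div
      ((T.differentiable_Q.continuous.comp continuous_sin).continuousAt) hQ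

variable {t : ℝ}

lemma sqrt_one_sub_div_sq (ht : t ∈ Ico 0 (π / 2)) :
    √(1 - (T.P (sin t) / T.Q (sin t)) ^ 2) = cos t * T.F (sin t) / T.Q (sin t) := by
  have hx := Ico_subset_Icc_self (sin_mem_Ico_of_mem_Ico ht)
  have hQ := T.Q_pos _ hx
  have hF := T.F_pos _ hx
  have hc := cos_pos_of_mem_Ico ht
  rw [← sqrt_sq (by positivity : 0 ≤ cos t * T.F (sin t) / T.Q (sin t))]
  congr 1
  field_simp
  linear_combination T.sq_sub_sq (sin t) - T.F (sin t) ^ 2 * cos_sq' t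

lemma div_sq_lt_one (ht : t ∈ Ico 0 (π / 2)) : (T.P (sin t) / T.Q (sin t)) ^ 2 < 1 := by
  have h := T.sqrt_one_sub_div_sq ht
  have hx := Ico_subset_Icc_self (sin_mem_Ico_of_mem_Ico ht)
  have : 0 < cos t * T.F (sin t) / T.Q (sin t) :=
    div_pos (mul_pos (cos_pos_of_mem_Ico ht) (T.F_pos _ hx)) (T.Q_pos _ hx)
  rw [← h, sqrt_pos] at this
  linarith

lemma sin_amplitude (ht : t ∈ Ico 0 (π / 2)) :
    sin (T.amplitude t) = T.P (sin t) / T.Q (sin t) := by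
  have h := abs_lt.1 ((sq_lt_one_iff_abs_lt_one _).1 (T.div_sq_lt_one ht))
  exact sin_arcsin h.1.le h.2.le

lemma hasDerivAt_amplitude (ht : t ∈ Ico 0 (π / 2)) :
    HasDerivAt T.amplitude (M * T.G (sin t) / T.Q (sin t)) t := by
  have hx := Ico_subset_Icc_self (sin_mem_Ico_of_mem_Ico ht)
  have hQ := T.Q_pos _ hx
  have hc := cos_pos_of_mem_Ico ht
  have hy := abs_lt.1 ((sq_lt_one_iff_abs_lt_one _).1 (T.div_sq_lt_one ht))
  have hquot : HasDerivAt (fun u => T.P (sin u) / T.Q (sin u))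
      (cos t * (M * (T.F (sin t) * T.G (sin t))) / T.Q (sin t) ^ 2) t :=
    (((T.differentiable_P _).hasDerivAt.comp t (hasDerivAt_sin t)).div
      ((T.differentiable_Q _).hasDerivAt.comp t (hasDerivAt_sin t)) hQ.ne').congr_deriv
      (by rw [Function.comp_apply, Function.comp_apply, ← T.wronskian]; ring)
  refine ((hasDerivAt_arcsin hy.1.ne' hy.2.ne).comp t hquot).congr_deriv ?_
  have hF := T.F_pos _ hx
  rw [T.sqrt_one_sub_div_sq ht]
  field_simp

lemma sqrt_one_sub_sq_mul_sin_amplitude_sq (ha : a ^ 2 < 1) (ht : t ∈ Ico 0 (π / 2)) :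
    √(1 - b ^ 2 * sin (T.amplitude t) ^ 2) =
      √(1 - a ^ 2 * sin t ^ 2) * T.G (sin t) / T.Q (sin t) := by
  have hx := Ico_subset_Icc_self (sin_mem_Ico_of_mem_Ico ht)
  have hQ := T.Q_pos _ hx
  have hG := T.G_pos _ hx
  have hsq := sq_sqrt (one_sub_sq_mul_sin_sq_pos ha t).le
  rw [← sqrt_sq (by positivity : 0 ≤ √(1 - a ^ 2 * sin t ^ 2) * T.G (sin t) / T.Q (sin t)),
    T.sin_amplitude ht]
  congr 1
  field_simp
  linear_combination T.sq_sub_sq_mul_sq (sin t) - T.G (sin t) ^ 2 * hsq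

lemma ellipticF_amplitude (ha : a ^ 2 < 1) (hb : b ^ 2 < 1) {τ : ℝ} (hτ : τ ∈ Ico 0 (π / 2)) :
    ellipticF b (T.amplitude τ) = M * ellipticF a τ := by
  have hsub : Icc 0 τ ⊆ Ico 0 (π / 2) := Icc_subset_Ico_right hτ.2
  have hS : ContinuousOn (fun t => M * T.G (sin t) / T.Q (sin t)) (uIcc 0 τ) := by
    rw [uIcc_of_le hτ.1]
    exact ((continuous_const.mul (T.continuous_G.comp continuous_sin)).continuousOn).div
      (T.differentiable_Q.continuous.comp continuous_sin).continuousOn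
      fun t ht => (T.Q_pos _ (Ico_subset_Icc_self (sin_mem_Ico_of_mem_Ico (hsub ht)))).ne'
  have hderiv : ∀ t ∈ uIcc 0 τ, HasDerivAt T.amplitude (M * T.G (sin t) / T.Q (sin t)) t := by
    rw [uIcc_of_le hτ.1]
    exact fun t ht => T.hasDerivAt_amplitude (hsub ht)
  rw [ellipticF, ← T.amplitude_zero, ← intervalIntegral.integral_deriv_smul_comp hderiv hS
    (continuous_one_div_sqrt_one_sub_sq_mul_sin_sq hb), ellipticF,
    ← intervalIntegral.integral_const_mul]
  refine intervalIntegral.integral_congr fun t ht => ?_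
  rw [uIcc_of_le hτ.1] at ht
  have hx := Ico_subset_Icc_self (sin_mem_Ico_of_mem_Ico (hsub ht))
  have hQ := T.Q_pos _ hx
  have hG := T.G_pos _ hx
  have hsqrt := sqrt_pos.2 (one_sub_sq_mul_sin_sq_pos ha t)
  simp only [Function.comp_apply, smul_eq_mul, T.sqrt_one_sub_sq_mul_sin_amplitude_sq ha (hsub ht)]
  field_simp

end RationalTransformation

theorem RationalTransformation.K_eq_mul_K {a b M : ℝ} (T : RationalTransformation a b M)
    (ha : a ^ 2 < 1) (hb : b ^ 2 < 1) : K b = M * K a := by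
  have hF : Tendsto (fun τ => ellipticF b (T.amplitude τ)) (𝓝[<] (π / 2)) (𝓝 (K b)) := by
    have := ((continuous_ellipticF hb).continuousAt.comp
      (T.continuousAt_amplitude_pi_div_two)).tendsto
    rw [Function.comp_apply, T.amplitude_pi_div_two] at this
    exact this.mono_left nhdsWithin_le_nhds
  have hK : Tendsto (fun τ => M * ellipticF a τ) (𝓝[<] (π / 2)) (𝓝 (M * K a)) :=
    ((continuous_const.mul (continuous_ellipticF ha)).tendsto _).mono_left nhdsWithin_le_nhds
  refine tendsto_nhds_unique (hF.congr' ?_) hK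
  filter_upwards [Ioo_mem_nhdsLT pi_div_two_pos] with τ hτ
  exact T.ellipticF_amplitude ha hb (Ioo_subset_Ico_self hτ)

def evenQuartic (c₂ c₄ x : ℝ) : ℝ := 1 + c₂ * x ^ 2 + c₄ * x ^ 4

def oddQuintic (c₁ c₃ c₅ x : ℝ) : ℝ := c₁ * x + c₃ * x ^ 3 + c₅ * x ^ 5

lemma hasDerivAt_evenQuartic (c₂ c₄ x : ℝ) :
    HasDerivAt (evenQuartic c₂ c₄) (2 * c₂ * x + 4 * c₄ * x ^ 3) x :=
  ((((hasDerivAt_pow 2 x).const_mul c₂).const_add 1).add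
    ((hasDerivAt_pow 4 x).const_mul c₄)).congr_deriv (by push_cast; ring)

lemma hasDerivAt_oddQuintic (c₁ c₃ c₅ x : ℝ) :
    HasDerivAt (oddQuintic c₁ c₃ c₅) (c₁ + 3 * c₃ * x ^ 2 + 5 * c₅ * x ^ 4) x :=
  ((((hasDerivAt_id x).const_mul c₁).add ((hasDerivAt_pow 3 x).const_mul c₃)).add
    ((hasDerivAt_pow 5 x).const_mul c₅)).congr_deriv (by push_cast; ring)

lemma evenQuartic_pos {c₂ c₄ x : ℝ} (hc₂ : -1 < c₂) (hc₄ : 0 ≤ c₄) (hx : x ∈ Icc (0 : ℝ) 1) :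
    0 < evenQuartic c₂ c₄ x := by
  have hx2 : x ^ 2 ≤ 1 := pow_le_one₀ hx.1 hx.2
  have hx4 : 0 ≤ c₄ * x ^ 4 := by positivity
  unfold evenQuartic
  rcases le_or_gt 0 c₂ with h | h <;> nlinarith [sq_nonneg x]

namespace SingularModulusOneFifth

noncomputable def ρ : ℝ := √(38 + 17 * √5)

noncomputable def κ : ℝ := 1 / 2 + (9 - 4 * √5) * ρ

lemma sqrt_five_sq : √5 ^ 2 = 5 := sq_sqrt (by norm_num)

lemma ρ_sq : ρ ^ 2 = 38 + 17 * √5 := sq_sqrt (by positivity)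

lemma sqrt_five_ρ_bounds : 2.23606 < √5 ∧ √5 < 2.23607 ∧ 8.7185 < ρ ∧ ρ < 8.7186 ∧
    19.494 < √5 * ρ ∧ √5 * ρ < 19.496 := by
  have h₁ : 2.23606 < √5 := lt_sqrt_of_sq_lt (by norm_num)
  have h₂ : √5 < 2.23607 := (sqrt_lt' (by norm_num)).2 (by norm_num)
  have h₃ : 8.7185 < ρ := lt_sqrt_of_sq_lt (by linarith)
  have h₄ : ρ < 8.7186 := (sqrt_lt' (by norm_num)).2 (by linarith)
  exact ⟨h₁, h₂, h₃, h₄, by nlinarith, by nlinarith⟩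

lemma κ_mem_Ioo : κ ∈ Ioo 0 1 := by
  obtain ⟨_, _, _, _, _, _⟩ := sqrt_five_ρ_bounds
  constructor <;> unfold κ <;> linarith

lemma div_eq_κ : (9 + 4 * √5 + 2 * √(38 + 17 * √5)) / (18 + 8 * √5) = κ := by
  rw [div_eq_iff (by positivity), ← ρ, κ]
  linear_combination 32 * ρ * sqrt_five_sq

noncomputable def quinticTransformation : RationalTransformation √(1 - κ) √κ √5 where
  P := oddQuintic √5 (-√5 + (7 * √5 - 15) / 2 * ρ) ((3 * √5 - 1) / 4 + (15 - 7 * √5) / 4 * ρ)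
  Q := evenQuartic ((25 - 11 * √5) / 2 * ρ) ((3 * √5 - 5) / 4 + (29 * √5 - 65) / 4 * ρ)
  F := evenQuartic ((25 - 11 * √5) / 2 * ρ - 2) ((3 * √5 - 1) / 4 + (15 - 7 * √5) / 4 * ρ)
  G := evenQuartic ((13 * √5 - 29) / 2 * ρ - 1) ((3 - √5) / 4 + (29 - 13 * √5) / 4 * ρ)
  differentiable_P x := (hasDerivAt_oddQuintic _ _ _ x).differentiableAt
  differentiable_Q x := (hasDerivAt_evenQuartic _ _ x).differentiableAt
  continuous_G := continuous_iff_continuousAt.2 fun x => (hasDerivAt_evenQuartic _ _ x).continuousAt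
  Q_pos _ hx := by
    obtain ⟨_, _, _, _, _, _⟩ := sqrt_five_ρ_bounds
    exact evenQuartic_pos (by linarith) (by linarith) hx
  F_pos _ hx := by
    obtain ⟨_, _, _, _, _, _⟩ := sqrt_five_ρ_bounds
    exact evenQuartic_pos (by linarith) (by linarith) hx
  G_pos _ hx := by
    obtain ⟨_, _, _, _, _, _⟩ := sqrt_five_ρ_bounds
    exact evenQuartic_pos (by linarith) (by linarith) hx
  sq_sub_sq x := by
    simp only [oddQuintic, evenQuartic]
    grind [sqrt_five_sq, ρ_sq]
  sq_sub_sq_mul_sq x := by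
    rw [sq_sqrt κ_mem_Ioo.1.le, sq_sqrt (sub_nonneg.2 κ_mem_Ioo.2.le)]
    simp only [oddQuintic, evenQuartic, κ]
    grind [sqrt_five_sq, ρ_sq]
  wronskian x := by
    rw [(hasDerivAt_oddQuintic _ _ _ x).deriv, (hasDerivAt_evenQuartic _ _ x).deriv]
    simp only [oddQuintic, evenQuartic]
    grind [sqrt_five_sq, ρ_sq]
  P_zero := by simp [oddQuintic]
  P_one := by
    simp only [oddQuintic, evenQuartic]
    grind [sqrt_five_sq]

lemma K_sqrt_κ : K √κ = √5 * K √(1 - κ) := by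
  obtain ⟨hκ₀, hκ₁⟩ := κ_mem_Ioo
  exact quinticTransformation.K_eq_mul_K (by rw [sq_sqrt (by linarith)]; linarith)
    (by rwa [sq_sqrt hκ₀.le])

end SingularModulusOneFifth

open SingularModulusOneFifth

theorem singular_modulus_one_fifth :
    Real.sqrt ((9 + 4 * Real.sqrt 5 + 2 * Real.sqrt (38 + 17 * Real.sqrt 5)) /
        (18 + 8 * Real.sqrt 5)) ∈ Set.Ioo (0:ℝ) 1 ∧
    K (Real.sqrt (1 - (Real.sqrt ((9 + 4 * Real.sqrt 5 + 2 * Real.sqrt (38 + 17 * Real.sqrt 5)) /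
          (18 + 8 * Real.sqrt 5)))^2)) /
      K (Real.sqrt ((9 + 4 * Real.sqrt 5 + 2 * Real.sqrt (38 + 17 * Real.sqrt 5)) /
          (18 + 8 * Real.sqrt 5))) = Real.sqrt (1/5) := by
  obtain ⟨hκ₀, hκ₁⟩ := κ_mem_Ioo
  rw [div_eq_κ, sq_sqrt hκ₀.le, K_sqrt_κ, sqrt_div' _ (by norm_num : (0:ℝ) ≤ 5), sqrt_one]
  refine ⟨⟨sqrt_pos.2 hκ₀, (sqrt_lt' one_pos).2 (by rwa [one_pow])⟩, ?_⟩
  have := K_pos (k := √(1 - κ)) (by rw [sq_sqrt (by linarith)]; linarith)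
  field_simp
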